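/- arXiv:1509.01459 — 8 statements merged into one kernel-verified Lean document; each statement's English description precedes it below -/
import Mathlib

section
/- A nonzero S = (u,v,w) is a zero divisor for ⊛ (i.e., there is T ≠ 0 with S ⊛ T = 0) if and only if u³ - v³ + w³ + 3uvw = 0. -/
def jmul (S T : ℝ × ℝ × ℝ) : ℝ × ℝ × ℝ :=
  (S.1 * T.1 - S.2.1 * T.2.2 - S.2.2 * T.2.1,
   S.1 * T.2.1 + S.2.1 * T.1 - S.2.2 * T.2.2,
   S.1 * T.2.2 + S.2.1 * T.2.1 + S.2.2 * T.1)

noncomputable def jnorm (S : ℝ × ℝ × ℝ) : ℝ :=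
  Real.sqrt (S.1 ^ 2 + S.2.1 ^ 2 + S.2.2 ^ 2)

/-! `T ↦ S ⊛ T` is linear, so `S` is a zero divisor exactly when the matrix of this map is
singular, and its determinant is `u³ - v³ + w³ + 3uvw`. -/

section

variable (R : Type*) [Semiring R]

def prodProdEquivFinThree : (R × R × R) ≃ₗ[R] (Fin 3 → R) where
  toFun T := ![T.1, T.2.1, T.2.2]
  invFun t := (t 0, t 1, t 2)
  map_add' _ _ := by ext i; fin_cases i <;> rfl
  map_smul' _ _ := by ext i; fin_cases i <;> rfl
  left_inv _ := rfl
  right_inv t := by ext i; fin_cases i <;> rfl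

@[simp]
theorem prodProdEquivFinThree_apply (T : R × R × R) :
    prodProdEquivFinThree R T = ![T.1, T.2.1, T.2.2] :=
  rfl

end

def jmulLeftMatrix (u v w : ℝ) : Matrix (Fin 3) (Fin 3) ℝ :=
  !![u, -w, -v; v, u, -w; w, v, u]

theorem det_jmulLeftMatrix (u v w : ℝ) :
    (jmulLeftMatrix u v w).det = u ^ 3 - v ^ 3 + w ^ 3 + 3 * u * v * w := by
  rw [jmulLeftMatrix, Matrix.det_fin_three]
  simp only [Matrix.of_apply, Matrix.cons_val', Matrix.cons_val_zero, Matrix.cons_val_one,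
    Matrix.cons_val_two, Matrix.empty_val', Matrix.cons_val_fin_one, Matrix.head_cons,
    Matrix.tail_cons, Matrix.head_fin_const]
  ring

theorem jmulLeftMatrix_mulVec (u v w : ℝ) (T : ℝ × ℝ × ℝ) :
    (jmulLeftMatrix u v w).mulVec (prodProdEquivFinThree ℝ T) =
      prodProdEquivFinThree ℝ (jmul (u, v, w) T) := by
  ext i
  fin_cases i <;>
    simp [jmulLeftMatrix, jmul, Matrix.mulVec, dotProduct, Fin.sum_univ_three] <;> ring

theorem stmt_10_general (u v w : ℝ) :
    (∃ T : ℝ × ℝ × ℝ, T ≠ 0 ∧ jmul (u, v, w) T = 0) ↔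
      u ^ 3 - v ^ 3 + w ^ 3 + 3 * u * v * w = 0 := by
  rw [← det_jmulLeftMatrix, ← Matrix.exists_mulVec_eq_zero_iff]
  refine (prodProdEquivFinThree ℝ).toEquiv.exists_congr fun T => ?_
  rw [LinearEquiv.coe_toEquiv, jmulLeftMatrix_mulVec, LinearEquiv.map_ne_zero_iff,
    LinearEquiv.map_eq_zero_iff]

theorem stmt_10 (u v w : ℝ) (h : (u, v, w) ≠ ((0 : ℝ), (0 : ℝ), (0 : ℝ))) :
    (∃ T : ℝ × ℝ × ℝ, T ≠ 0 ∧ jmul (u, v, w) T = 0) ↔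
      u ^ 3 - v ^ 3 + w ^ 3 + 3 * u * v * w = 0 :=
  stmt_10_general u v w
end

section
/- For all S, T ∈ ℝ³, ‖S ⊛ T‖² = ‖S‖²‖T‖² + 2{S}{T}, where {(u,v,w)} = uv - uw + vw and ‖·‖ is the Euclidean norm. -/
def jbr (S : ℝ × ℝ × ℝ) : ℝ := S.1 * S.2.1 - S.1 * S.2.2 + S.2.1 * S.2.2

lemma jnorm_sq (S : ℝ × ℝ × ℝ) : jnorm S ^ 2 = S.1 ^ 2 + S.2.1 ^ 2 + S.2.2 ^ 2 :=
  Real.sq_sqrt (by positivity)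

theorem stmt_11 : ∀ S T : ℝ × ℝ × ℝ,
    jnorm (jmul S T) ^ 2 = jnorm S ^ 2 * jnorm T ^ 2 + 2 * jbr S * jbr T := by
  rintro ⟨a, b, c⟩ ⟨u, v, w⟩
  simp only [jnorm_sq, jmul, jbr]
  ring
end

section
/- For all S, T ∈ ℝ³, ‖S ⊛ T‖ ≤ √3 · ‖S‖ · ‖T‖, where ‖·‖ is the Euclidean norm. -/
lemma sq_dot_three_le (x₁ x₂ x₃ y₁ y₂ y₃ : ℝ) :
    (x₁ * y₁ + x₂ * y₂ + x₃ * y₃) ^ 2 ≤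
      (x₁ ^ 2 + x₂ ^ 2 + x₃ ^ 2) * (y₁ ^ 2 + y₂ ^ 2 + y₃ ^ 2) := by
  nlinarith [sq_nonneg (x₁ * y₂ - x₂ * y₁), sq_nonneg (x₁ * y₃ - x₃ * y₁),
    sq_nonneg (x₂ * y₃ - x₃ * y₂)]

lemma jmul_sq_sum_le (S T : ℝ × ℝ × ℝ) :
    (jmul S T).1 ^ 2 + (jmul S T).2.1 ^ 2 + (jmul S T).2.2 ^ 2 ≤
      3 * ((S.1 ^ 2 + S.2.1 ^ 2 + S.2.2 ^ 2) * (T.1 ^ 2 + T.2.1 ^ 2 + T.2.2 ^ 2)) := by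
  obtain ⟨a, b, c⟩ := S
  obtain ⟨u, v, w⟩ := T
  have h₁ := sq_dot_three_le a (-c) (-b) u v w
  have h₂ := sq_dot_three_le b a (-c) u v w
  have h₃ := sq_dot_three_le c b a u v w
  simp only [jmul]
  linear_combination h₁ + h₂ + h₃

theorem stmt_12 : ∀ S T : ℝ × ℝ × ℝ,
    jnorm (jmul S T) ≤ Real.sqrt 3 * jnorm S * jnorm T := by
  intro S T
  rw [jnorm, jnorm, jnorm, mul_assoc, ← Real.sqrt_mul (by positivity),
    ← Real.sqrt_mul (by norm_num)]
  exact Real.sqrt_le_sqrt (jmul_sq_sum_le S T)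
end

section
/- If M₁ = (m₁, m₁+n₁, n₁) and M₂ = (m₂, m₂+n₂, n₂) are two nonzero elements of the plane M, then M₁ ⊛ M₂ ≠ 0; in fact ‖M₁ ⊛ M₂‖² = (3/2)‖M₁‖²‖M₂‖². -/
lemma jnorm_eq_zero_iff {S : ℝ × ℝ × ℝ} : jnorm S = 0 ↔ S = 0 := by
  obtain ⟨a, b, c⟩ := S
  rw [jnorm, Real.sqrt_eq_zero (by positivity)]
  simp only [Prod.mk_eq_zero]
  constructor
  · intro h
    refine ⟨?_, ?_, ?_⟩ <;> nlinarith [sq_nonneg a, sq_nonneg b, sq_nonneg c]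
  · rintro ⟨rfl, rfl, rfl⟩
    norm_num

lemma jnorm_jmul_sq_of_mem_plane {S T : ℝ × ℝ × ℝ}
    (hS : S.1 - S.2.1 + S.2.2 = 0) (hT : T.1 - T.2.1 + T.2.2 = 0) :
    jnorm (jmul S T) ^ 2 = 3 / 2 * jnorm S ^ 2 * jnorm T ^ 2 := by
  obtain ⟨a, b, c⟩ := S
  obtain ⟨d, e, f⟩ := T
  obtain rfl : b = a + c := by linarith
  obtain rfl : e = d + f := by linarith
  simp only [jnorm_sq, jmul]
  ring

theorem stmt_13 (m₁ n₁ m₂ n₂ : ℝ)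
    (h₁ : ((m₁, m₁ + n₁, n₁) : ℝ × ℝ × ℝ) ≠ 0)
    (h₂ : ((m₂, m₂ + n₂, n₂) : ℝ × ℝ × ℝ) ≠ 0) :
    jmul (m₁, m₁ + n₁, n₁) (m₂, m₂ + n₂, n₂) ≠ 0 ∧
      jnorm (jmul (m₁, m₁ + n₁, n₁) (m₂, m₂ + n₂, n₂)) ^ 2 =
        (3 / 2) * jnorm (m₁, m₁ + n₁, n₁) ^ 2 * jnorm (m₂, m₂ + n₂, n₂) ^ 2 := by
  have key := jnorm_jmul_sq_of_mem_plane (S := (m₁, m₁ + n₁, n₁)) (T := (m₂, m₂ + n₂, n₂))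
    (by ring) (by ring)
  refine ⟨fun hzero => ?_, key⟩
  rw [jnorm_eq_zero_iff.mpr hzero] at key
  simp [jnorm_eq_zero_iff, h₁, h₂] at key
end

section
/- The equation X ⊛ X = (r,0,0) with r < 0 has no solution X ∈ ℝ³; with r = 0 its unique solution is X = (0,0,0); and with r > 0 it has exactly 4 solutions: ±(√r, 0, 0) and ±(√r/3, 2√r/3, -2√r/3). -/
/-!
Writing `X = (a, b, c)`, the last two coordinates of `X ⊛ X = (r, 0, 0)` read `2ab = c²` and
`2ac = -b²`; combining them gives `b³ + c³ = 0`, so `c = -b`, and then `b (b - 2a) = 0`.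
Hence `X = (a, 0, 0)` with `a² = r` or `X = (a, 2a, -2a)` with `(3a)² = r`, and it remains
to solve these two quadratic equations in `a`.
-/

theorem jmul_self_eq_iff {a b c r : ℝ} :
    jmul (a, b, c) (a, b, c) = (r, 0, 0) ↔
      (b = 0 ∧ c = 0 ∧ a ^ 2 = r) ∨ (b = 2 * a ∧ c = -(2 * a) ∧ (3 * a) ^ 2 = r) := by
  simp only [jmul, Prod.mk.injEq]
  constructor
  · rintro ⟨h₁, h₂, h₃⟩
    obtain rfl : c = -b := (Odd.pow_inj (n := 3) (by decide)).mp
      (by linear_combination b * h₃ - c * h₂)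
    have : b * (b - 2 * a) = 0 := by linear_combination -h₂
    rcases mul_eq_zero.mp this with rfl | hb
    · exact .inl ⟨rfl, neg_zero, by linear_combination h₁⟩
    · obtain rfl : b = 2 * a := by linarith
      exact .inr ⟨rfl, rfl, by linear_combination h₁⟩
  · rintro (⟨rfl, rfl, rfl⟩ | ⟨rfl, rfl, rfl⟩) <;> refine ⟨?_, ?_, ?_⟩ <;> ring

theorem sq_eq_iff_eq_sqrt_or_eq_neg_sqrt {x r : ℝ} (hr : 0 ≤ r) :
    x ^ 2 = r ↔ x = √r ∨ x = -√r := by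
  conv_lhs => rw [← Real.sq_sqrt hr]
  exact sq_eq_sq_iff_eq_or_eq_neg

theorem jmul_self_eq_iff_of_pos {a b c r : ℝ} (hr : 0 < r) :
    jmul (a, b, c) (a, b, c) = (r, 0, 0) ↔
      (a, b, c) = (√r, 0, 0) ∨ (a, b, c) = (-√r, 0, 0) ∨
        (a, b, c) = (√r / 3, 2 * √r / 3, -(2 * √r) / 3) ∨
        (a, b, c) = (-√r / 3, -(2 * √r) / 3, 2 * √r / 3) := by
  simp only [jmul_self_eq_iff, sq_eq_iff_eq_sqrt_or_eq_neg_sqrt hr.le, Prod.mk.injEq]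
  constructor
  · rintro (⟨rfl, rfl, rfl | rfl⟩ | ⟨rfl, rfl, h | h⟩)
    · exact .inl ⟨rfl, rfl, rfl⟩
    · exact .inr (.inl ⟨rfl, rfl, rfl⟩)
    · obtain rfl : a = √r / 3 := by linarith
      exact .inr (.inr (.inl ⟨rfl, by ring, by ring⟩))
    · obtain rfl : a = -√r / 3 := by linarith
      exact .inr (.inr (.inr ⟨rfl, by ring, by ring⟩))
  · rintro (⟨rfl, rfl, rfl⟩ | ⟨rfl, rfl, rfl⟩ | ⟨rfl, rfl, rfl⟩ | ⟨rfl, rfl, rfl⟩)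
    · exact .inl ⟨rfl, rfl, .inl rfl⟩
    · exact .inl ⟨rfl, rfl, .inr rfl⟩
    · exact .inr ⟨by ring, by ring, .inl (by ring)⟩
    · exact .inr ⟨by ring, by ring, .inr (by ring)⟩

theorem stmt_14 (r : ℝ) :
    (r < 0 → ¬∃ X : ℝ × ℝ × ℝ, jmul X X = (r, 0, 0)) ∧
    (r = 0 → {X : ℝ × ℝ × ℝ | jmul X X = (r, 0, 0)} = {0}) ∧
    (0 < r → {X : ℝ × ℝ × ℝ | jmul X X = (r, 0, 0)} =
      {(Real.sqrt r, 0, 0), (-Real.sqrt r, 0, 0),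
       (Real.sqrt r / 3, 2 * Real.sqrt r / 3, -(2 * Real.sqrt r) / 3),
       (-(Real.sqrt r) / 3, -(2 * Real.sqrt r) / 3, 2 * Real.sqrt r / 3)}) := by
  refine ⟨?_, ?_, ?_⟩
  · rintro hr ⟨⟨a, b, c⟩, h⟩
    rcases jmul_self_eq_iff.mp h with ⟨-, -, ha⟩ | ⟨-, -, ha⟩ <;>
      linarith [sq_nonneg a, sq_nonneg (3 * a)]
  · rintro rfl
    ext ⟨a, b, c⟩
    simp only [Set.mem_ofPred_eq, jmul_self_eq_iff, Set.mem_singleton_iff, Prod.mk_eq_zero,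
      pow_eq_zero_iff two_ne_zero, mul_eq_zero, three_ne_zero, false_or]
    constructor
    · rintro (⟨rfl, rfl, rfl⟩ | ⟨rfl, rfl, rfl⟩) <;> simp
    · rintro ⟨rfl, rfl, rfl⟩
      simp
  · intro hr
    ext ⟨a, b, c⟩
    simp only [Set.mem_ofPred_eq, Set.mem_insert_iff, Set.mem_singleton_iff]
    exact jmul_self_eq_iff_of_pos hr
end

section
/- The idempotents of (ℝ³, ⊛), i.e., solutions of X ⊛ X = X, are exactly (0,0,0), (1,0,0), (1/3)(1,-1,1), and (1/3)(2,1,-1). -/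
def evalNegOne (X : ℝ × ℝ × ℝ) : ℝ := X.1 - X.2.1 + X.2.2

lemma evalNegOne_jmul (X Y : ℝ × ℝ × ℝ) :
    evalNegOne (jmul X Y) = evalNegOne X * evalNegOne Y := by
  simp only [evalNegOne, jmul]
  ring

/-- Multiplication of `p + q ω` and `u + v ω`, where `ω² = ω - 1`. -/
def omegaMul (z w : ℝ × ℝ) : ℝ × ℝ :=
  (z.1 * w.1 - z.2 * w.2, z.1 * w.2 + z.2 * w.1 + z.2 * w.2)

/-- `a + b ω + c ω² = (a - c) + (b + c) ω`. -/
def evalOmega (X : ℝ × ℝ × ℝ) : ℝ × ℝ := (X.1 - X.2.2, X.2.1 + X.2.2)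

lemma evalOmega_jmul (X Y : ℝ × ℝ × ℝ) :
    evalOmega (jmul X Y) = omegaMul (evalOmega X) (evalOmega Y) := by
  simp only [evalOmega, omegaMul, jmul, Prod.mk.injEq]
  constructor <;> ring

lemma eq_zero_or_eq_one_of_omegaMul_self {z : ℝ × ℝ} (hz : omegaMul z z = z) :
    z = (0, 0) ∨ z = (1, 0) := by
  obtain ⟨p, q⟩ := z
  simp only [omegaMul, Prod.mk.injEq] at hz ⊢
  obtain ⟨hre, him⟩ := hz
  have hq : q = 0 := by
    have hfactor : q * (2 * p + q - 1) = 0 := by linear_combination him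
    refine (mul_eq_zero.mp hfactor).resolve_right fun hq ↦ ?_
    -- then `3p² - 3p + 1 = 0`, which has negative discriminant
    have : 3 * p ^ 2 - 3 * p + 1 = 0 := by
      rw [show q = 1 - 2 * p by linarith] at hre
      linear_combination -hre
    nlinarith [sq_nonneg (2 * p - 1)]
  subst hq
  have hp : IsIdempotentElem p := by
    unfold IsIdempotentElem
    linarith
  rcases IsIdempotentElem.iff_eq_zero_or_one.mp hp with rfl | rfl <;> simp

lemma eq_of_evalNegOne_evalOmega (X : ℝ × ℝ × ℝ) :
    let r := evalNegOne X
    let p := (evalOmega X).1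
    let q := (evalOmega X).2
    X = ((2 * p + q + r) / 3, (p + 2 * q - r) / 3, (q - p + r) / 3) := by
  obtain ⟨a, b, c⟩ := X
  simp only [evalNegOne, evalOmega, Prod.mk.injEq]
  refine ⟨?_, ?_, ?_⟩ <;> ring

theorem stmt_15 : {X : ℝ × ℝ × ℝ | jmul X X = X} =
    {((0 : ℝ), (0 : ℝ), (0 : ℝ)), (1, 0, 0), (1 / 3, -(1 / 3), 1 / 3),
     (2 / 3, 1 / 3, -(1 / 3))} := by
  ext X
  simp only [Set.mem_ofPred_eq, Set.mem_insert_iff, Set.mem_singleton_iff]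
  constructor
  · intro hX
    have hr : IsIdempotentElem (evalNegOne X) := by
      rw [IsIdempotentElem, ← evalNegOne_jmul, hX]
    have hz : omegaMul (evalOmega X) (evalOmega X) = evalOmega X := by
      rw [← evalOmega_jmul, hX]
    rw [eq_of_evalNegOne_evalOmega X]
    rcases IsIdempotentElem.iff_eq_zero_or_one.mp hr with hr | hr <;>
      rcases eq_zero_or_eq_one_of_omegaMul_self hz with hz | hz <;>
      simp only [hr, hz] <;> norm_num
  · rintro (rfl | rfl | rfl | rfl) <;> simp only [jmul, Prod.mk.injEq] <;> norm_num
end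

section
/- There is no X ∈ ℝ³ with X ⊛ X = (-1,0,0); consequently, there is no unital ℝ-algebra homomorphism from ℂ into (ℝ³, ⊛). -/
theorem jmul_self_ne_neg_one (X : ℝ × ℝ × ℝ) : jmul X X ≠ (-1, 0, 0) := by
  obtain ⟨a, b, c⟩ := X
  intro h
  simp only [jmul, Prod.mk.injEq] at h
  obtain ⟨h₁, h₂, h₃⟩ := h
  have hbc : 0 < b * c := by nlinarith [sq_nonneg a]
  have ha : a = 0 := by
    have h4 : 4 * a ^ 2 * (b * c) = -(b * c) ^ 2 := by
      linear_combination c ^ 2 * h₃ + 2 * a * c * h₂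
    have : a ^ 2 = 0 := by nlinarith [sq_nonneg a, sq_nonneg (b * c)]
    simpa using this
  subst ha
  have hc : c = 0 := by nlinarith
  simp [hc] at hbc

theorem stmt_16 :
    (¬∃ X : ℝ × ℝ × ℝ, jmul X X = (-1, 0, 0)) ∧
    ¬∃ f : ℂ → ℝ × ℝ × ℝ,
      (∀ z w : ℂ, f (z * w) = jmul (f z) (f w)) ∧
      (∀ z w : ℂ, f (z + w) = f z + f w) ∧
      (∀ (r : ℝ) (z : ℂ), f (r • z) = r • f z) ∧
      f 1 = (1, 0, 0) := by
  refine ⟨fun ⟨X, hX⟩ ↦ jmul_self_ne_neg_one X hX, ?_⟩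
  rintro ⟨f, hmul, -, hsmul, hone⟩
  have hneg_one : f (-1) = (-1, 0, 0) := by
    simpa [hone] using hsmul (-1) 1
  apply jmul_self_ne_neg_one (f Complex.I)
  rw [← hmul, Complex.I_mul_I, hneg_one]
end

section
/- The map sending (u,v,w) ∈ ℝ³ to the 3×3 Toeplitz matrix with rows (u, -w, -v), (v, u, -w), (w, v, u) is an injective unital ℝ-algebra homomorphism from (ℝ³, ⊛) into the 3×3 real matrices; in particular the matrix image of S ⊛ T equals the matrix product of the images of S and T, and det of the image of (u,v,w) equals u³ - v³ + w³ + 3uvw. -/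
def toMat (S : ℝ × ℝ × ℝ) : Matrix (Fin 3) (Fin 3) ℝ :=
  !![S.1, -S.2.2, -S.2.1;
     S.2.1, S.1, -S.2.2;
     S.2.2, S.2.1, S.1]

/-! `toMat (u, v, w) = u • 1 + v • J + w • J ^ 2` for the signed cyclic shift `J` with `J ^ 3 = -1`,
so `(ℝ³, jmul)` is `ℝ[X] ⧸ (X ^ 3 + 1)` and `toMat` is its regular representation; injectivity
holds because the first column of `toMat S` is `S` itself. -/

theorem toMat_injective : Function.Injective toMat := by
  rintro ⟨u, v, w⟩ ⟨u', v', w'⟩ h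
  have hcol : ∀ i, toMat (u, v, w) i 0 = toMat (u', v', w') i 0 := fun i => by rw [h]
  simp only [Prod.mk.injEq]
  exact ⟨hcol 0, hcol 1, hcol 2⟩

theorem toMat_one : toMat (1, 0, 0) = 1 := by
  simp [toMat, Matrix.one_fin_three]

theorem toMat_jmul (S T : ℝ × ℝ × ℝ) : toMat (jmul S T) = toMat S * toMat T := by
  ext i j
  fin_cases i <;> fin_cases j <;>
    simp [toMat, jmul, Matrix.mul_apply, Fin.sum_univ_three] <;> ring

theorem toMat_add (S T : ℝ × ℝ × ℝ) : toMat (S + T) = toMat S + toMat T := by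
  ext i j
  fin_cases i <;> fin_cases j <;> simp [toMat, add_comm]

theorem toMat_smul (r : ℝ) (S : ℝ × ℝ × ℝ) : toMat (r • S) = r • toMat S := by
  ext i j
  fin_cases i <;> fin_cases j <;> simp [toMat]

theorem det_toMat (S : ℝ × ℝ × ℝ) :
    (toMat S).det = S.1 ^ 3 - S.2.1 ^ 3 + S.2.2 ^ 3 + 3 * S.1 * S.2.1 * S.2.2 := by
  simp [toMat, Matrix.det_fin_three]
  ring

theorem stmt_19 :
    Function.Injective toMat ∧
    toMat (1, 0, 0) = 1 ∧
    (∀ S T : ℝ × ℝ × ℝ, toMat (jmul S T) = toMat S * toMat T) ∧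
    (∀ S T : ℝ × ℝ × ℝ, toMat (S + T) = toMat S + toMat T) ∧
    (∀ (r : ℝ) (S : ℝ × ℝ × ℝ), toMat (r • S) = r • toMat S) ∧
    (∀ S : ℝ × ℝ × ℝ, (toMat S).det =
      S.1 ^ 3 - S.2.1 ^ 3 + S.2.2 ^ 3 + 3 * S.1 * S.2.1 * S.2.2) :=
  ⟨toMat_injective, toMat_one, toMat_jmul, toMat_add, toMat_smul, det_toMat⟩
end
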